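/- Let ρ_1, ρ_2 be probability densities on ℝ^d and W_c ∈ L^∞(ℝ^d) symmetric. Define φ_c(x,y) = (W_c∗ρ_2)(x) + (W_c∗ρ_1)(y) − W_c(x−y) − ∫_{ℝ^d} (W_c∗ρ_2) ρ_1 dx. Then φ_c satisfies the cancellations ∫ φ_c(x,y) ρ_1(x) dx = 0 for all y and ∫ φ_c(x,y) ρ_2(y) dy = 0 for all x, and for every 0 < η < 1/(4√2 e ‖W_c‖_∞): sup_{N ≥ 2} ∫_{(ℝ^d)^N × (ℝ^d)^N} exp( (η/N) Σ_{i,j=1}^N φ_c(x_i, y_j) ) ρ_1^{⊗N}(dx) ρ_2^{⊗N}(dy) < ∞. -/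

import Mathlib

/-!
The cancellations are Fubini's theorem together with the evenness of `W_c`. For the exponential
bound, expand `exp` into its power series. The `k`-th moment of `∑ᵢⱼ φ_c(xᵢ, yⱼ)` is a sum over
index maps `σ : Fin k → Fin N × Fin N` of integrals of products of `φ_c`, and such an integral
vanishes as soon as some `xᵢ` or some `yⱼ` occurs exactly once, by the cancellations. For the
surviving `σ` both coordinate maps have no fiber of size one, hence an image of size at most
`k / 2`, so there are at most `(k + 1)² (N k e / 2)^k` of them. With `|φ_c| ≤ 4 ‖W_c‖_∞` and
`k^k ≤ e^k k!`, the `k`-th term of the series is at most `(k + 1)² (2 η ‖W_c‖_∞ e²)^k`, uniformly in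
`N`; this is summable because `e < 2√2`.
-/

open MeasureTheory Real

noncomputable section

/-- `ρ` is a probability density on the measure space `α`. -/
def IsProbDensity {α : Type*} [MeasureSpace α] (ρ : α → ℝ) : Prop :=
  Measurable ρ ∧ (∀ x, 0 ≤ ρ x) ∧ ∫ x, ρ x = 1

/-- The convolution `(W∗ρ)(x) = ∫ W(x−y) ρ(y) dy`. -/
def convW {d : ℕ} (W ρ : (Fin d → ℝ) → ℝ) (x : Fin d → ℝ) : ℝ :=
  ∫ y, W (x - y) * ρ y

/-- The probability measure on `ℝ^d` with density `ρ`. -/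
def densMeasure {d : ℕ} (ρ : (Fin d → ℝ) → ℝ) : Measure (Fin d → ℝ) :=
  volume.withDensity fun x => ENNReal.ofReal (ρ x)

open Finset

section Densities

variable {α : Type*} [MeasureSpace α] {ρ g : α → ℝ} {C : ℝ}

theorem IsProbDensity.integrable (h : IsProbDensity ρ) : Integrable ρ :=
  .of_integral_ne_zero (by rw [h.2.2]; exact one_ne_zero)

theorem IsProbDensity.integral_const_mul (h : IsProbDensity ρ) (c : ℝ) :
    ∫ x, c * ρ x = c := by
  rw [MeasureTheory.integral_const_mul, h.2.2, mul_one]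

theorem IsProbDensity.integrable_bdd_mul (h : IsProbDensity ρ) (hg : AEStronglyMeasurable g)
    (hgC : ∀ z, |g z| ≤ C) : Integrable fun z => g z * ρ z :=
  h.integrable.bdd_mul hg (.of_forall hgC)

theorem IsProbDensity.abs_integral_mul_le (h : IsProbDensity ρ) (hgC : ∀ z, |g z| ≤ C) :
    |∫ z, g z * ρ z| ≤ C := by
  calc |∫ z, g z * ρ z| ≤ ∫ z, C * ρ z :=
        norm_integral_le_of_norm_le (f := fun z => g z * ρ z) (h.integrable.const_mul C)
          (.of_forall fun z => by
            rw [Real.norm_eq_abs, abs_mul, abs_of_nonneg (h.2.1 z)]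
            exact mul_le_mul_of_nonneg_right (hgC z) (h.2.1 z))
    _ = C := h.integral_const_mul C

end Densities

section Convolution

variable {d : ℕ} {W ρ ρ₁ ρ₂ : (Fin d → ℝ) → ℝ} {M : ℝ}

theorem IsProbDensity.isProbabilityMeasure_densMeasure (h : IsProbDensity ρ) :
    IsProbabilityMeasure (densMeasure ρ) := by
  constructor
  rw [densMeasure, withDensity_apply _ MeasurableSet.univ, setLIntegral_univ,
    ← ofReal_integral_eq_lintegral_ofReal h.integrable (.of_forall h.2.1), h.2.2,
    ENNReal.ofReal_one]

theorem IsProbDensity.integral_densMeasure (h : IsProbDensity ρ) (g : (Fin d → ℝ) → ℝ) :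
    ∫ x, g x ∂densMeasure ρ = ∫ x, g x * ρ x := by
  have hdens : densMeasure ρ = volume.withDensity fun x => ((ρ x).toNNReal : ENNReal) := rfl
  rw [hdens, integral_withDensity_eq_integral_smul h.1.real_toNNReal]
  refine integral_congr_ae (.of_forall fun x => ?_)
  simp [NNReal.smul_def, Real.coe_toNNReal _ (h.2.1 x), mul_comm]

theorem measurable_convW (hW : Measurable W) (hρ : Measurable ρ) : Measurable (convW W ρ) :=
  (StronglyMeasurable.integral_prod_right' (f := fun p : (Fin d → ℝ) × (Fin d → ℝ) =>
    W (p.1 - p.2) * ρ p.2) (by fun_prop)).measurable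

theorem IsProbDensity.abs_convW_le (hρ : IsProbDensity ρ) (hWM : ∀ z, |W z| ≤ M)
    (x : Fin d → ℝ) : |convW W ρ x| ≤ M :=
  hρ.abs_integral_mul_le fun _ => hWM _

theorem integral_sub_mul_eq_convW (hWsymm : ∀ z, W (-z) = W z) (y : Fin d → ℝ) :
    ∫ x, W (x - y) * ρ x = convW W ρ y := by
  simp_rw [convW, ← hWsymm (y - _), neg_sub]

theorem integral_convW_mul_comm (hρ₁ : IsProbDensity ρ₁) (hρ₂ : IsProbDensity ρ₂)
    (hW : Measurable W) (hWM : ∀ z, |W z| ≤ M) (hWsymm : ∀ z, W (-z) = W z) :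
    ∫ y, convW W ρ₁ y * ρ₂ y = ∫ x, convW W ρ₂ x * ρ₁ x := by
  have hint : Integrable (Function.uncurry fun y x => W (y - x) * ρ₁ x * ρ₂ y)
      (volume.prod volume) := by
    have hmeas : Measurable (Function.uncurry fun y x => W (y - x) * ρ₁ x * ρ₂ y) :=
      ((hW.comp (measurable_fst.sub measurable_snd)).mul (hρ₁.1.comp measurable_snd)).mul
        (hρ₂.1.comp measurable_fst)
    refine ((hρ₂.integrable.mul_prod hρ₁.integrable).const_mul M).mono' hmeas.aestronglyMeasurable
      (.of_forall fun p => ?_)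
    simp only [Function.uncurry, Real.norm_eq_abs, abs_mul, abs_of_nonneg (hρ₁.2.1 _),
      abs_of_nonneg (hρ₂.2.1 _)]
    have := mul_le_mul_of_nonneg_right (hWM (p.1 - p.2)) (mul_nonneg (hρ₂.2.1 p.1) (hρ₁.2.1 p.2))
    linarith
  calc ∫ y, convW W ρ₁ y * ρ₂ y = ∫ y, ∫ x, W (y - x) * ρ₁ x * ρ₂ y := by
        simp_rw [convW, integral_mul_const]
    _ = ∫ x, ∫ y, W (y - x) * ρ₁ x * ρ₂ y := integral_integral_swap hint
    _ = ∫ x, convW W ρ₂ x * ρ₁ x := by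
        simp_rw [← integral_sub_mul_eq_convW hWsymm, ← integral_mul_const]
        congr 1 with x
        congr 1 with y
        ring

end Convolution

section CrossTerm

variable {d : ℕ} {W ρ₁ ρ₂ : (Fin d → ℝ) → ℝ} {M : ℝ}

def crossTerm (W ρ₁ ρ₂ : (Fin d → ℝ) → ℝ) (x y : Fin d → ℝ) : ℝ :=
  convW W ρ₂ x + convW W ρ₁ y - W (x - y) - ∫ z, convW W ρ₂ z * ρ₁ z

theorem measurable_crossTerm (hρ₁ : Measurable ρ₁) (hρ₂ : Measurable ρ₂) (hW : Measurable W) :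
    Measurable (Function.uncurry (crossTerm W ρ₁ ρ₂)) :=
  ((((measurable_convW hW hρ₂).comp measurable_fst).add
    ((measurable_convW hW hρ₁).comp measurable_snd)).sub
    (hW.comp (measurable_fst.sub measurable_snd))).sub measurable_const

theorem abs_crossTerm_le (hρ₁ : IsProbDensity ρ₁) (hρ₂ : IsProbDensity ρ₂)
    (hWM : ∀ z, |W z| ≤ M) (x y : Fin d → ℝ) : |crossTerm W ρ₁ ρ₂ x y| ≤ 4 * M := by
  have h₁ := hρ₂.abs_convW_le hWM x
  have h₂ := hρ₁.abs_convW_le hWM y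
  have h₃ := hWM (x - y)
  have h₄ := hρ₁.abs_integral_mul_le (hρ₂.abs_convW_le hWM)
  rw [abs_le] at *
  unfold crossTerm
  constructor <;> linarith

theorem integral_crossTerm_mul_left (hρ₁ : IsProbDensity ρ₁) (hρ₂ : IsProbDensity ρ₂)
    (hW : Measurable W) (hWM : ∀ z, |W z| ≤ M) (hWsymm : ∀ z, W (-z) = W z) (y : Fin d → ℝ) :
    ∫ x, crossTerm W ρ₁ ρ₂ x y * ρ₁ x = 0 := by
  have hconv : Integrable fun x => convW W ρ₂ x * ρ₁ x :=
    hρ₁.integrable_bdd_mul (measurable_convW hW hρ₂.1).aestronglyMeasurable (hρ₂.abs_convW_le hWM)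
  have hW' : Integrable fun x => W (x - y) * ρ₁ x :=
    hρ₁.integrable_bdd_mul (hW.comp (measurable_id.sub measurable_const)).aestronglyMeasurable
      fun _ => hWM _
  have hconst : ∀ c : ℝ, Integrable fun x => c * ρ₁ x := fun c => hρ₁.integrable.const_mul c
  simp only [crossTerm, add_mul, sub_mul]
  rw [integral_sub, integral_sub, integral_add hconv (hconst _), hρ₁.integral_const_mul,
    hρ₁.integral_const_mul, integral_sub_mul_eq_convW hWsymm, add_sub_cancel_right, sub_self]
  · exact hconv.add (hconst _)
  · exact hW'
  · exact (hconv.add (hconst _)).sub hW'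
  · exact hconst _

theorem crossTerm_swap (hρ₁ : IsProbDensity ρ₁) (hρ₂ : IsProbDensity ρ₂) (hW : Measurable W)
    (hWM : ∀ z, |W z| ≤ M) (hWsymm : ∀ z, W (-z) = W z) (x y : Fin d → ℝ) :
    crossTerm W ρ₁ ρ₂ x y = crossTerm W ρ₂ ρ₁ y x := by
  rw [crossTerm, crossTerm, integral_convW_mul_comm hρ₂ hρ₁ hW hWM hWsymm, ← hWsymm (y - x),
    neg_sub]
  ring

theorem integral_crossTerm_mul_right (hρ₁ : IsProbDensity ρ₁) (hρ₂ : IsProbDensity ρ₂)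
    (hW : Measurable W) (hWM : ∀ z, |W z| ≤ M) (hWsymm : ∀ z, W (-z) = W z) (x : Fin d → ℝ) :
    ∫ y, crossTerm W ρ₁ ρ₂ x y * ρ₂ y = 0 := by
  simp_rw [crossTerm_swap hρ₁ hρ₂ hW hWM hWsymm x]
  exact integral_crossTerm_mul_left hρ₂ hρ₁ hW hWM hWsymm x

end CrossTerm

section Combinatorics

variable {κ ι : Type*} [Fintype κ]

theorem card_filter_fst_snd {ι' : Type*} [DecidableEq κ] [Fintype ι] [Fintype ι']
    (p : (κ → ι) → Prop) (q : (κ → ι') → Prop) [DecidablePred p] [DecidablePred q] :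
    #{σ : κ → ι × ι' | p (Prod.fst ∘ σ) ∧ q (Prod.snd ∘ σ)} = #{f | p f} * #{g | q g} := by
  rw [← card_product]
  refine card_nbij' (fun σ => (Prod.fst ∘ σ, Prod.snd ∘ σ)) (fun fg l => (fg.1 l, fg.2 l))
    ?_ ?_ (fun _ _ => rfl) (fun _ _ => rfl)
  · intro σ hσ
    simpa using hσ
  · intro fg hfg
    simpa [Function.comp_def] using hfg

variable [DecidableEq ι]

def NoSingletonFibers (f : κ → ι) : Prop :=
  ∀ a, #{l | f l = a} ≠ 1

instance [Fintype ι] : DecidablePred (NoSingletonFibers : (κ → ι) → Prop) :=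
  fun _ => inferInstanceAs (Decidable (∀ _, _))

theorem NoSingletonFibers.two_mul_card_image_le {f : κ → ι} (hf : NoSingletonFibers f) :
    2 * #(univ.image f) ≤ Fintype.card κ := by
  rw [← card_univ, card_eq_sum_card_image f univ, mul_comm, ← smul_eq_mul, ← sum_const]
  refine sum_le_sum fun a ha => ?_
  obtain ⟨l, -, rfl⟩ := mem_image.mp ha
  have hpos : 0 < #{l' | f l' = f l} := card_pos.mpr ⟨l, by simp⟩
  have := hf (f l)
  omega

variable [DecidableEq κ] [Fintype ι]

theorem card_noSingletonFibers_le :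
    #{f : κ → ι | NoSingletonFibers f} ≤
      ∑ p ∈ range (Fintype.card κ / 2 + 1), (Fintype.card ι).choose p * p ^ Fintype.card κ := by
  set k := Fintype.card κ
  have hmaps : ∀ f ∈ ({f : κ → ι | NoSingletonFibers f} : Finset _),
      #(univ.image f) ∈ range (k / 2 + 1) := by
    intro f hf
    have := (mem_filter.mp hf).2.two_mul_card_image_le
    rw [mem_range]; omega
  rw [card_eq_sum_card_fiberwise hmaps]
  refine sum_le_sum fun p _ => ?_
  have hsub : {f ∈ ({f : κ → ι | NoSingletonFibers f} : Finset _) | #(univ.image f) = p} ⊆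
      (powersetCard p univ).biUnion fun s => Fintype.piFinset fun _ : κ => s := by
    intro f hf
    simp only [mem_biUnion, mem_powersetCard, Fintype.mem_piFinset]
    exact ⟨univ.image f, ⟨subset_univ _, (mem_filter.mp hf).2⟩,
      fun l => mem_image_of_mem f (mem_univ l)⟩
  calc _ ≤ _ := card_le_card hsub
    _ ≤ _ := card_biUnion_le
    _ = (Fintype.card ι).choose p * p ^ k := by
      simp only [Fintype.card_piFinset, prod_const, card_univ]
      rw [sum_congr rfl fun s hs => by rw [(mem_powersetCard.mp hs).2], sum_const,
        card_powersetCard, card_univ, smul_eq_mul]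

end Combinatorics

section Moments

variable {α β κ ι ι' : Type*} [Fintype κ]

theorem integral_pi_prod_eq_zero_of_fiber_eq_singleton [MeasurableSpace α] [Fintype ι]
    [DecidableEq ι] {μ : Measure α} [SigmaFinite μ] {f : κ → ι} {g : κ → α → ℝ} {a : ι} {l₀ : κ}
    (hfib : ({l | f l = a} : Finset κ) = {l₀}) (hg : ∫ u, g l₀ u ∂μ = 0) :
    ∫ x : ι → α, ∏ l, g l (x (f l)) ∂Measure.pi (fun _ => μ) = 0 := by
  have hfiberwise : ∀ x : ι → α, ∏ l, g l (x (f l)) = ∏ b, ∏ l with f l = b, g l (x b) := by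
    intro x
    rw [← prod_fiberwise univ f]
    refine prod_congr rfl fun b _ => prod_congr rfl fun l hl => ?_
    rw [(mem_filter.mp hl).2]
  simp_rw [hfiberwise]
  rw [integral_fintype_prod_eq_prod (fun b u => ∏ l with f l = b, g l u)]
  exact prod_eq_zero (mem_univ a) (by simp only [hfib, prod_singleton, hg])

def pairMonomial (φ : α → β → ℝ) (σ : κ → ι × ι') (z : (ι → α) × (ι' → β)) : ℝ :=
  ∏ l, φ (z.1 (σ l).1) (z.2 (σ l).2)

variable {φ : α → β → ℝ} {B : ℝ}

theorem sum_sum_pow_eq_sum_pairMonomial [Fintype ι] [Fintype ι'] (k : ℕ)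
    (z : (ι → α) × (ι' → β)) :
    (∑ i, ∑ j, φ (z.1 i) (z.2 j)) ^ k = ∑ σ : Fin k → ι × ι', pairMonomial φ σ z := by
  rw [← Fintype.sum_prod_type', Fintype.sum_pow]
  rfl

theorem abs_pairMonomial_le (hφb : ∀ x y, |φ x y| ≤ B) (σ : κ → ι × ι')
    (z : (ι → α) × (ι' → β)) : |pairMonomial φ σ z| ≤ B ^ Fintype.card κ := by
  rw [pairMonomial, abs_prod, ← card_univ, ← prod_const]
  exact prod_le_prod (fun _ _ => abs_nonneg _) fun _ _ => hφb _ _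

variable [Fintype ι] [Fintype ι']

theorem abs_sum_sum_le (hφb : ∀ x y, |φ x y| ≤ B) (x : ι → α) (y : ι' → β) :
    |∑ i, ∑ j, φ (x i) (y j)| ≤ Fintype.card ι * (Fintype.card ι' * B) := by
  refine (abs_sum_le_sum_abs _ _).trans ?_
  rw [← nsmul_eq_mul, ← card_univ]
  refine sum_le_card_nsmul _ _ _ fun i _ => (abs_sum_le_sum_abs _ _).trans ?_
  rw [← nsmul_eq_mul, ← card_univ]
  exact sum_le_card_nsmul _ _ _ fun j _ => hφb _ _

variable [MeasurableSpace α] [MeasurableSpace β] {μ : Measure α} {ν : Measure β}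

theorem integrable_pairMonomial [IsFiniteMeasure μ] [IsFiniteMeasure ν]
    (hφm : Measurable (Function.uncurry φ)) (hφb : ∀ x y, |φ x y| ≤ B) (σ : κ → ι × ι') :
    Integrable (pairMonomial φ σ) ((Measure.pi fun _ => μ).prod (Measure.pi fun _ => ν)) := by
  have hm : Measurable (pairMonomial φ σ) := Finset.measurable_prod _ fun l _ =>
    hφm.comp (f := fun z : (ι → α) × (ι' → β) => (z.1 (σ l).1, z.2 (σ l).2)) (by fun_prop)
  exact .of_bound hm.aestronglyMeasurable _ (.of_forall (abs_pairMonomial_le hφb σ))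

variable [DecidableEq ι] [DecidableEq ι']

theorem integral_pairMonomial_eq_zero [IsFiniteMeasure μ] [IsFiniteMeasure ν]
    (hφm : Measurable (Function.uncurry φ)) (hφb : ∀ x y, |φ x y| ≤ B)
    (hcμ : ∀ y, ∫ x, φ x y ∂μ = 0) (hcν : ∀ x, ∫ y, φ x y ∂ν = 0) {σ : κ → ι × ι'}
    (hσ : ¬(NoSingletonFibers (Prod.fst ∘ σ) ∧ NoSingletonFibers (Prod.snd ∘ σ))) :
    ∫ z, pairMonomial φ σ z ∂((Measure.pi fun _ => μ).prod (Measure.pi fun _ => ν)) = 0 := by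
  have hint := integrable_pairMonomial (μ := μ) (ν := ν) hφm hφb σ
  simp only [NoSingletonFibers, not_and_or, not_forall, not_not, card_eq_one] at hσ
  rcases hσ with ⟨a, l₀, hfib⟩ | ⟨b, l₀, hfib⟩
  · rw [integral_prod_symm _ hint]
    refine integral_eq_zero_of_ae (.of_forall fun y => ?_)
    exact integral_pi_prod_eq_zero_of_fiber_eq_singleton (g := fun l u => φ u (y (σ l).2))
      hfib (hcμ _)
  · rw [integral_prod _ hint]
    refine integral_eq_zero_of_ae (.of_forall fun x => ?_)
    exact integral_pi_prod_eq_zero_of_fiber_eq_singleton (g := fun l w => φ (x (σ l).1) w)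
      hfib (hcν _)

theorem abs_integral_sum_sum_pow_le [IsProbabilityMeasure μ] [IsProbabilityMeasure ν]
    (hφm : Measurable (Function.uncurry φ)) (hφb : ∀ x y, |φ x y| ≤ B)
    (hcμ : ∀ y, ∫ x, φ x y ∂μ = 0) (hcν : ∀ x, ∫ y, φ x y ∂ν = 0) (k : ℕ) :
    |∫ z : (ι → α) × (ι' → β), (∑ i, ∑ j, φ (z.1 i) (z.2 j)) ^ k
        ∂((Measure.pi fun _ => μ).prod (Measure.pi fun _ => ν))| ≤
      #{f : Fin k → ι | NoSingletonFibers f} * #{g : Fin k → ι' | NoSingletonFibers g} * B ^ k := by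
  set P := (Measure.pi fun _ : ι => μ).prod (Measure.pi fun _ : ι' => ν)
  have hbound : ∀ σ : Fin k → ι × ι', |∫ z, pairMonomial φ σ z ∂P| ≤ B ^ k := fun σ => by
    simpa using norm_integral_le_of_norm_le_const (μ := P) (f := pairMonomial φ σ)
      (.of_forall fun z => by simpa using abs_pairMonomial_le hφb σ z)
  simp_rw [sum_sum_pow_eq_sum_pairMonomial]
  rw [integral_finsetSum _ fun σ _ => integrable_pairMonomial hφm hφb σ,
    ← sum_filter_of_ne fun σ _ hσ => not_not.mp fun h =>
      hσ (integral_pairMonomial_eq_zero hφm hφb hcμ hcν h)]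
  calc _ ≤ _ := abs_sum_le_sum_abs _ _
    _ ≤ _ := sum_le_card_nsmul _ _ _ fun σ _ => hbound σ
    _ = _ := by rw [card_filter_fst_snd, nsmul_eq_mul]; push_cast; ring

end Moments

section Estimates

theorem choose_mul_pow_self_le (N p : ℕ) : (N.choose p : ℝ) * p ^ p ≤ (N * exp 1) ^ p := by
  calc (N.choose p : ℝ) * p ^ p ≤ N ^ p / p.factorial * p ^ p := by
        gcongr; exact Nat.choose_le_pow_div p N
    _ = N ^ p * ((p : ℝ) ^ p / p.factorial) := by ring
    _ ≤ N ^ p * exp p := by gcongr; exact pow_div_factorial_le_exp _ (by positivity) p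
    _ = (N * exp 1) ^ p := by rw [mul_pow, exp_one_pow]

-- Squared, so that the bound `(N (k / 2) e)^(k / 2)` needs no half-integer exponent.
theorem sq_choose_mul_pow_le {N k p : ℕ} (hp : 2 * p ≤ k) :
    ((N.choose p : ℝ) * p ^ k) ^ 2 ≤ (N * (k / 2) * exp 1) ^ k := by
  rcases lt_or_ge N p with hNp | hpN
  · rw [Nat.choose_eq_zero_of_lt hNp]; simp; positivity
  obtain ⟨q, rfl⟩ := Nat.exists_eq_add_of_le hp
  have hpN' : (p : ℝ) ≤ N := by exact_mod_cast hpN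
  have hpk : (p : ℝ) ≤ (2 * p + q : ℕ) / 2 := by push_cast; linarith [(q.cast_nonneg : (0:ℝ) ≤ q)]
  calc ((N.choose p : ℝ) * p ^ (2 * p + q)) ^ 2
      = ((N.choose p : ℝ) * p ^ p) ^ 2 * p ^ q * p ^ (2 * p + q) := by ring
    _ ≤ ((N * exp 1) ^ p) ^ 2 * N ^ q * ((2 * p + q : ℕ) / 2) ^ (2 * p + q) := by
        gcongr
        exact choose_mul_pow_self_le N p
    _ ≤ (N * exp 1) ^ (2 * p) * (N * exp 1) ^ q * ((2 * p + q : ℕ) / 2) ^ (2 * p + q) := by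
        rw [← pow_mul, mul_comm p 2]
        gcongr
        exact le_mul_of_one_le_right (by positivity) (one_le_exp zero_le_one)
    _ = _ := by rw [← pow_add, ← mul_pow]; ring

theorem sq_sum_choose_mul_pow_le (N k : ℕ) :
    ((∑ p ∈ range (k / 2 + 1), N.choose p * p ^ k : ℕ) : ℝ) ^ 2 ≤
      (k + 1) ^ 2 * (N * (k / 2) * exp 1) ^ k := by
  have hcard : ((range (k / 2 + 1)).card : ℝ) ≤ k + 1 := by
    rw [card_range]; exact_mod_cast Nat.succ_le_succ (Nat.div_le_self k 2)
  push_cast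
  calc (∑ p ∈ range (k / 2 + 1), (N.choose p : ℝ) * p ^ k) ^ 2
      ≤ #(range (k / 2 + 1)) * ∑ p ∈ range (k / 2 + 1), ((N.choose p : ℝ) * p ^ k) ^ 2 :=
        sq_sum_le_card_mul_sum_sq
    _ ≤ #(range (k / 2 + 1)) * (#(range (k / 2 + 1)) • (N * (k / 2) * exp 1) ^ k) := by
        gcongr
        refine sum_le_card_nsmul _ _ _ fun p hp => sq_choose_mul_pow_le ?_
        have := mem_range.mp hp
        omega
    _ ≤ (k + 1) ^ 2 * (N * (k / 2) * exp 1) ^ k := by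
        rw [nsmul_eq_mul, ← mul_assoc, ← sq]
        gcongr

theorem pow_div_factorial_mul_le {N : ℕ} (hN : N ≠ 0) {η B : ℝ} (hη : 0 ≤ η) (hB : 0 ≤ B)
    (k : ℕ) :
    (η / N) ^ k / k.factorial * ((N * (k / 2) * exp 1) ^ k * B ^ k) ≤
      (η * B * exp 1 ^ 2 / 2) ^ k := by
  calc (η / N) ^ k / k.factorial * ((N * (k / 2) * exp 1) ^ k * B ^ k)
      = (η / N * N * B * exp 1 / 2) ^ k * ((k : ℝ) ^ k / k.factorial) := by ring
    _ = (η * B * exp 1 / 2) ^ k * ((k : ℝ) ^ k / k.factorial) := by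
        rw [div_mul_cancel₀ η (Nat.cast_ne_zero.mpr hN)]
    _ ≤ (η * B * exp 1 / 2) ^ k * exp k := by
        gcongr; exact pow_div_factorial_le_exp _ (by positivity) k
    _ = (η * B * exp 1 ^ 2 / 2) ^ k := by rw [← exp_one_pow, ← mul_pow]; ring

theorem exp_one_lt_two_mul_sqrt_two : exp 1 < 2 * √2 := by
  have h8 : 2 * √2 = √8 := by
    rw [show (8 : ℝ) = 2 ^ 2 * 2 by norm_num, Real.sqrt_mul' _ zero_le_two,
      Real.sqrt_sq zero_le_two]
  rw [h8, Real.lt_sqrt (exp_pos 1).le]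
  nlinarith [exp_one_lt_d9, exp_pos 1]

end Estimates

section ExpSeries

variable {Ω : Type*} [MeasurableSpace Ω] {P : Measure Ω} [IsFiniteMeasure P] {S : Ω → ℝ} {c : ℝ}

theorem hasSum_integral_pow_div_factorial (hS : AEStronglyMeasurable S P)
    (hSb : ∀ z, |S z| ≤ c) :
    HasSum (fun k : ℕ => ∫ z, S z ^ k / k.factorial ∂P) (∫ z, exp (S z) ∂P) := by
  have hbound : ∀ (k : ℕ) z, ‖S z ^ k / (k.factorial : ℝ)‖ ≤ c ^ k / k.factorial := fun k z => by
    rw [norm_div, norm_pow, Real.norm_natCast, Real.norm_eq_abs]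
    gcongr
    exact hSb z
  have hint : ∀ k : ℕ, Integrable (fun z => S z ^ k / k.factorial) P := fun k =>
    .of_bound (by fun_prop) _ (.of_forall (hbound k))
  have hsum : Summable fun k : ℕ => ∫ z, ‖S z ^ k / (k.factorial : ℝ)‖ ∂P := by
    refine .of_nonneg_of_le (fun k => integral_nonneg fun z => norm_nonneg _) (fun k => ?_)
      ((NormedSpace.expSeries_div_summable c).mul_right (P.real Set.univ))
    calc ∫ z, ‖S z ^ k / (k.factorial : ℝ)‖ ∂P ≤ ∫ _z, c ^ k / k.factorial ∂P :=
          integral_mono (hint k).norm (integrable_const _) (hbound k)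
      _ = c ^ k / k.factorial * P.real Set.univ := by rw [integral_const, smul_eq_mul, mul_comm]
  have hexp : ∀ z, exp (S z) = ∑' k : ℕ, S z ^ k / k.factorial := fun z => by
    rw [Real.exp_eq_exp_ℝ, (NormedSpace.expSeries_div_hasSum_exp (S z)).tsum_eq]
  simp_rw [hexp]
  exact hasSum_integral_of_summable_integral_norm hint hsum

end ExpSeries

section ExponentialMoment

variable {α β : Type*} [MeasurableSpace α] [MeasurableSpace β] {μ : Measure α} {ν : Measure β}
  [IsProbabilityMeasure μ] [IsProbabilityMeasure ν] {φ : α → β → ℝ} {B : ℝ}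

theorem summable_add_one_sq_mul_geometric {r : ℝ} (hr₀ : 0 ≤ r) (hr₁ : r < 1) :
    Summable fun k : ℕ => ((k : ℝ) + 1) ^ 2 * r ^ k := by
  have hr : ‖r‖ < 1 := by rwa [Real.norm_eq_abs, abs_of_nonneg hr₀]
  refine ((summable_pow_mul_geometric_of_norm_lt_one 2 hr).add
    (((summable_pow_mul_geometric_of_norm_lt_one 1 hr).mul_left 2).add
      (summable_geometric_of_lt_one hr₀ hr₁))).congr fun k => ?_
  ring

theorem abs_integral_sum_sum_pow_fin_le (hφm : Measurable (Function.uncurry φ))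
    (hφb : ∀ x y, |φ x y| ≤ B) (hB : 0 ≤ B) (hcμ : ∀ y, ∫ x, φ x y ∂μ = 0)
    (hcν : ∀ x, ∫ y, φ x y ∂ν = 0) (N k : ℕ) :
    |∫ z : (Fin N → α) × (Fin N → β), (∑ i, ∑ j, φ (z.1 i) (z.2 j)) ^ k
        ∂((Measure.pi fun _ => μ).prod (Measure.pi fun _ => ν))| ≤
      (k + 1) ^ 2 * (N * (k / 2) * exp 1) ^ k * B ^ k := by
  have hcount : (#{f : Fin k → Fin N | NoSingletonFibers f} : ℝ) ≤
      ((∑ p ∈ range (k / 2 + 1), N.choose p * p ^ k : ℕ) : ℝ) := by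
    exact_mod_cast (by simpa using card_noSingletonFibers_le (κ := Fin k) (ι := Fin N))
  calc _ ≤ _ := abs_integral_sum_sum_pow_le hφm hφb hcμ hcν k
    _ ≤ ((∑ p ∈ range (k / 2 + 1), N.choose p * p ^ k : ℕ) : ℝ) ^ 2 * B ^ k := by
        rw [sq]; gcongr
    _ ≤ _ := by gcongr; exact sq_sum_choose_mul_pow_le N k

theorem lintegral_exp_sum_sum_le {N : ℕ} (hN : N ≠ 0)
    (hφm : Measurable (Function.uncurry φ)) (hφb : ∀ x y, |φ x y| ≤ B) (hB : 0 ≤ B)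
    (hcμ : ∀ y, ∫ x, φ x y ∂μ = 0) (hcν : ∀ x, ∫ y, φ x y ∂ν = 0) {η : ℝ} (hη : 0 ≤ η)
    (hr : η * B * exp 1 ^ 2 / 2 < 1) :
    ∫⁻ z : (Fin N → α) × (Fin N → β), ENNReal.ofReal (exp ((η / N) * ∑ i, ∑ j, φ (z.1 i) (z.2 j)))
        ∂((Measure.pi fun _ => μ).prod (Measure.pi fun _ => ν)) ≤
      ENNReal.ofReal (∑' k : ℕ, ((k : ℝ) + 1) ^ 2 * (η * B * exp 1 ^ 2 / 2) ^ k) := by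
  set P := (Measure.pi fun _ : Fin N => μ).prod (Measure.pi fun _ : Fin N => ν)
  set S : (Fin N → α) × (Fin N → β) → ℝ := fun z => ∑ i, ∑ j, φ (z.1 i) (z.2 j)
  have hSm : Measurable S := Finset.measurable_sum _ fun i _ => Finset.measurable_sum _ fun j _ =>
    hφm.comp (f := fun z : (Fin N → α) × (Fin N → β) => (z.1 i, z.2 j)) (by fun_prop)
  have hSb : ∀ z, |η / N * S z| ≤ η / N * (N * (N * B)) := fun z => by
    rw [abs_mul, abs_of_nonneg (by positivity)]
    gcongr
    simpa using abs_sum_sum_le hφb z.1 z.2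
  have hint : Integrable (fun z => exp (η / N * S z)) P :=
    .of_bound (by fun_prop) (exp (η / N * (N * (N * B)))) (.of_forall fun z => by
      rw [Real.norm_of_nonneg (exp_pos _).le]
      exact exp_le_exp.mpr ((le_abs_self _).trans (hSb z)))
  have hterm : ∀ k : ℕ, ∫ z, (η / N * S z) ^ k / k.factorial ∂P ≤
      ((k : ℝ) + 1) ^ 2 * (η * B * exp 1 ^ 2 / 2) ^ k := fun k => by
    simp_rw [mul_pow, mul_div_right_comm _ _ (k.factorial : ℝ)]
    rw [integral_const_mul]
    calc (η / N) ^ k / k.factorial * ∫ z, S z ^ k ∂P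
        ≤ (η / N) ^ k / k.factorial * |∫ z, S z ^ k ∂P| := by gcongr; exact le_abs_self _
      _ ≤ (η / N) ^ k / k.factorial * ((k + 1) ^ 2 * (N * (k / 2) * exp 1) ^ k * B ^ k) := by
          gcongr; exact abs_integral_sum_sum_pow_fin_le hφm hφb hB hcμ hcν N k
      _ = (k + 1) ^ 2 * ((η / N) ^ k / k.factorial * ((N * (k / 2) * exp 1) ^ k * B ^ k)) := by
          ring
      _ ≤ _ := by gcongr; exact pow_div_factorial_mul_le hN hη hB k
  rw [← ofReal_integral_eq_lintegral_ofReal hint (.of_forall fun z => (exp_pos _).le)]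
  exact ENNReal.ofReal_le_ofReal <| hasSum_le hterm
    (hasSum_integral_pow_div_factorial (hSm.aestronglyMeasurable.const_mul _) hSb)
    (summable_add_one_sq_mul_geometric (by positivity) hr).hasSum

end ExponentialMoment

/-- the cross-interaction function
`φ_c(x,y) = (W_c∗ρ₂)(x) + (W_c∗ρ₁)(y) − W_c(x−y) − ∫(W_c∗ρ₂)ρ₁`
satisfies the cancellations `∫ φ_c(x,y)ρ₁(x)dx = 0` for all `y` and
`∫ φ_c(x,y)ρ₂(y)dy = 0` for all `x`, and for every `0 < η < 1/(4√2 e ‖W_c‖_∞)`,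
`sup_{N≥2} ∫ exp((η/N) Σ_{i,j} φ_c(xᵢ,yⱼ)) dρ₁^{⊗N} dρ₂^{⊗N} < ∞`. -/
theorem cross_term_cancellation_and_exp_bound {d : ℕ} (ρ₁ ρ₂ Wc : (Fin d → ℝ) → ℝ)
    (hρ₁ : IsProbDensity ρ₁) (hρ₂ : IsProbDensity ρ₂)
    (hWc : Measurable Wc) (hWcbdd : ∃ M, ∀ z, |Wc z| ≤ M) (hWcsymm : ∀ z, Wc (-z) = Wc z)
    (φc : (Fin d → ℝ) → (Fin d → ℝ) → ℝ)
    (hφc : φc = fun x y =>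
      convW Wc ρ₂ x + convW Wc ρ₁ y - Wc (x - y) - ∫ z, convW Wc ρ₂ z * ρ₁ z) :
    ((∀ y, ∫ x, φc x y * ρ₁ x = 0) ∧ (∀ x, ∫ y, φc x y * ρ₂ y = 0)) ∧
    (∀ η : ℝ, 0 < η → η * (4 * Real.sqrt 2 * Real.exp 1 * ⨆ z, |Wc z|) < 1 →
      (⨆ (N : ℕ) (_ : 2 ≤ N),
        ∫⁻ z : (Fin N → (Fin d → ℝ)) × (Fin N → (Fin d → ℝ)),
          ENNReal.ofReal (Real.exp ((η / (N : ℝ)) * ∑ i, ∑ j, φc (z.1 i) (z.2 j)))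
        ∂((Measure.pi fun _ : Fin N => densMeasure ρ₁).prod
            (Measure.pi fun _ : Fin N => densMeasure ρ₂))) < ⊤) := by
  obtain ⟨M₀, hM₀⟩ := hWcbdd
  set M := ⨆ z, |Wc z|
  have hWM : ∀ z, |Wc z| ≤ M := le_ciSup ⟨M₀, Set.forall_mem_range.mpr hM₀⟩
  have hM : 0 ≤ M := (abs_nonneg _).trans (hWM 0)
  replace hφc : φc = crossTerm Wc ρ₁ ρ₂ := hφc
  subst hφc
  have hcan₁ := integral_crossTerm_mul_left hρ₁ hρ₂ hWc hWM hWcsymm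
  have hcan₂ := integral_crossTerm_mul_right hρ₁ hρ₂ hWc hWM hWcsymm
  refine ⟨⟨hcan₁, hcan₂⟩, fun η hη hηlt => ?_⟩
  have := hρ₁.isProbabilityMeasure_densMeasure
  have := hρ₂.isProbabilityMeasure_densMeasure
  have hr : η * (4 * M) * exp 1 ^ 2 / 2 < 1 := by
    have := exp_one_lt_two_mul_sqrt_two
    nlinarith [exp_pos 1, mul_nonneg hη.le hM]
  refine (iSup₂_le fun N hN => lintegral_exp_sum_sum_le (by omega)
    (measurable_crossTerm hρ₁.1 hρ₂.1 hWc) (abs_crossTerm_le hρ₁ hρ₂ hWM) (by positivity)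
    (fun y => (hρ₁.integral_densMeasure _).trans (hcan₁ y))
    (fun x => (hρ₂.integral_densMeasure _).trans (hcan₂ x)) hη.le hr).trans_lt
    ENNReal.ofReal_lt_top
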